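/- If G is an (n,k)-graph with k ≥ 1 and uv is an edge of G, then G - {u, v} is an (n, k-1)-graph. -/

import Mathlib

/-- A graph `G` is `k`-extendable if it has a perfect matching and every matching
consisting of `k` pairwise disjoint edges extends to a perfect matching. -/
def SimpleGraph.IsKExtendable {V : Type*} [Fintype V] (G : SimpleGraph V) (k : ℕ) : Prop :=
  (∃ M : G.Subgraph, M.IsPerfectMatching) ∧
  ∀ M : G.Subgraph, M.IsMatching → M.edgeSet.ncard = k →
    ∃ P : G.Subgraph, P.IsPerfectMatching ∧ M ≤ P

/-- A graph `G` is an `(n,k)`-graph if `|G| ≥ n + 2k + 2`, `|G| ≡ n (mod 2)`, and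
deleting any `n` vertices leaves a `k`-extendable graph. -/
def SimpleGraph.IsNKGraph {V : Type*} [Fintype V] [DecidableEq V]
    (G : SimpleGraph V) (n k : ℕ) : Prop :=
  n + 2 * k + 2 ≤ Fintype.card V ∧ Fintype.card V % 2 = n % 2 ∧
  ∀ S : Finset V, S.card = n →
    SimpleGraph.IsKExtendable (G.induce ((Sᶜ : Finset V) : Set V)) k

/-! Adding the edge `uv` to a `k`-matching of `G - {u, v}` gives a `(k + 1)`-matching of `G`.
A perfect matching of `G` extending it contains `uv`, so it restricts to a perfect matching of
`G - {u, v}`. That `G - {u, v}` has a perfect matching at all follows by feeding in a `k`-matching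
avoiding `u` and `v`, cut out of a perfect matching of `G`, which has at least `k + 2` edges when
`|G| ≥ 2k + 4`. For `(n, k)`-graphs, deleting `n` vertices `S` from `G - {u, v}` is the same as
deleting `u, v` from `G - S`, which is `(k + 1)`-extendable with at least `2k + 4` vertices. -/

namespace SimpleGraph

variable {V W : Type*} {G : SimpleGraph V}

namespace Subgraph

variable {M P : G.Subgraph}

lemma IsMatching.incidenceSet_subsingleton (hM : M.IsMatching) (v : V) :
    (M.incidenceSet v).Subsingleton := by
  rintro e ⟨he, hve⟩ e' ⟨he', hve'⟩
  obtain ⟨w, rfl⟩ := Sym2.mem_iff_exists.mp hve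
  obtain ⟨w', rfl⟩ := Sym2.mem_iff_exists.mp hve'
  obtain rfl := hM.eq_of_adj_left (M.mem_edgeSet.mp he) (M.mem_edgeSet.mp he')
  rfl

lemma IsPerfectMatching.card_le_two_mul_ncard_edgeSet [Finite V] (hP : P.IsPerfectMatching) :
    Nat.card V ≤ 2 * P.edgeSet.ncard := by
  have hfin : P.edgeSet.Finite := Set.toFinite _
  calc Nat.card V = P.verts.ncard := by rw [hP.2.verts_eq_univ, Set.ncard_univ]
    _ = (⋃ e ∈ hfin.toFinset, (e : Set V)).ncard := by
        rw [hP.1.verts_eq_biUnion_edgeSet]; simp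
    _ ≤ ∑ e ∈ hfin.toFinset, (e : Set V).ncard := Finset.set_ncard_biUnion_le _ _
    _ ≤ ∑ _e ∈ hfin.toFinset, 2 := Finset.sum_le_sum fun e _ => by
        induction e using Sym2.ind with
        | _ a b => rw [Sym2.coe_mk]; exact (Set.ncard_insert_le _ _).trans (by simp)
    _ = 2 * P.edgeSet.ncard := by
        rw [Finset.sum_const, smul_eq_mul, mul_comm, Set.ncard_eq_toFinset_card _ hfin]

lemma IsMatching.exists_edgeSet_eq (hM : M.IsMatching) {F : Set (Sym2 V)} (hF : F ⊆ M.edgeSet) :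
    ∃ N : G.Subgraph, N.IsMatching ∧ N.edgeSet = F := by
  let N : G.Subgraph :=
    { verts := {x | ∃ e ∈ F, x ∈ e}
      Adj := fun a b => s(a, b) ∈ F
      adj_sub := fun h => M.adj_sub (hF h)
      edge_vert := fun h => ⟨_, h, Sym2.mem_mk_left _ _⟩
      symm := ⟨fun a b h => by rwa [Sym2.eq_swap]⟩ }
  refine ⟨N, ?_, Set.ext fun e => Sym2.ind (fun _ _ => Iff.rfl) e⟩
  rintro x ⟨e, heF, hxe⟩
  obtain ⟨y, rfl⟩ := Sym2.mem_iff_exists.mp hxe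
  exact ⟨y, heF, fun y' hy' => hM.eq_of_adj_left (hF hy') (hF heF)⟩

lemma IsPerfectMatching.exists_isMatching_ncard_edgeSet_disjoint [Finite V]
    (hP : P.IsPerfectMatching) (T : Finset V) {m : ℕ} (hm : 2 * (m + T.card) ≤ Nat.card V) :
    ∃ N : G.Subgraph, N.IsMatching ∧ N.edgeSet.ncard = m ∧ Disjoint N.support T := by
  have hF : m ≤ (P.edgeSet \ ⋃ t ∈ T, P.incidenceSet t).ncard := by
    have hT : (⋃ t ∈ T, P.incidenceSet t).ncard ≤ T.card :=
      calc _ ≤ ∑ t ∈ T, (P.incidenceSet t).ncard := Finset.set_ncard_biUnion_le _ _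
        _ ≤ ∑ _t ∈ T, 1 := Finset.sum_le_sum fun t _ =>
            (Set.ncard_le_one_iff).mpr fun ha hb => hP.1.incidenceSet_subsingleton t ha hb
        _ = T.card := by simp
    have := Set.le_ncard_sdiff (⋃ t ∈ T, P.incidenceSet t) P.edgeSet
    have := hP.card_le_two_mul_ncard_edgeSet
    omega
  obtain ⟨F', hF'F, hF'⟩ := Set.exists_subset_card_eq hF
  obtain ⟨N, hN, hNF'⟩ := hP.1.exists_edgeSet_eq (hF'F.trans Set.sdiff_subset)
  refine ⟨N, hN, hNF' ▸ hF', Set.disjoint_left.mpr ?_⟩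
  rintro x ⟨y, hxy⟩ hxT
  have : s(x, y) ∈ P.edgeSet \ ⋃ t ∈ T, P.incidenceSet t := hF'F (hNF' ▸ hxy)
  exact this.2 (Set.mem_biUnion hxT ⟨this.1, Sym2.mem_mk_left x y⟩)

lemma IsPerfectMatching.comap_induce (hP : P.IsPerfectMatching) {s : Set V}
    (hs : ∀ ⦃x y⦄, x ∈ s → P.Adj x y → y ∈ s) :
    (P.comap (Embedding.induce s).toHom).IsPerfectMatching := by
  refine isPerfectMatching_iff.mpr fun x => ?_
  obtain ⟨y, hxy, hy⟩ := isPerfectMatching_iff.mp hP x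
  exact ⟨⟨y, hs x.2 hxy⟩, ⟨P.adj_sub hxy, hxy⟩, fun z hz => Subtype.ext (hy z hz.2)⟩

end Subgraph

noncomputable def induceInduceIsoOfImageEq (G : SimpleGraph V) {A C : Set V} {B : Set A}
    {D : Set C} (h : Subtype.val '' B = Subtype.val '' D) :
    (G.induce A).induce B ≃g (G.induce C).induce D where
  toEquiv := (Equiv.Set.image _ B Subtype.val_injective).trans
    ((Equiv.setCongr h).trans (Equiv.Set.image _ D Subtype.val_injective).symm)
  map_rel_iff' {p q} := by
    have hval : ∀ y, ((Equiv.Set.image _ D Subtype.val_injective).symm y : C).1 = y.1 :=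
      fun y => congrArg Subtype.val ((Equiv.Set.image _ D _).apply_symm_apply y)
    simp [hval]

variable [Fintype V] {k : ℕ} {u v : V}

lemma IsKExtendable.exists_isPerfectMatching_adj_le (hG : G.IsKExtendable (k + 1))
    (huv : G.Adj u v) {N : G.Subgraph} (hN : N.IsMatching) (hNk : N.edgeSet.ncard = k)
    (hu : u ∉ N.support) (hv : v ∉ N.support) :
    ∃ P : G.Subgraph, P.IsPerfectMatching ∧ P.Adj u v ∧ N ≤ P := by
  have hdisj : Disjoint N.support (G.subgraphOfAdj huv).support := by
    rw [support_subgraphOfAdj, Set.disjoint_insert_right, Set.disjoint_singleton_right]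
    exact ⟨hu, hv⟩
  have huvN : s(u, v) ∉ N.edgeSet := fun h => hu ⟨v, h⟩
  obtain ⟨P, hP, hle⟩ := hG.2 _ (hN.sup (.subgraphOfAdj huv) hdisj) <| by
    rw [Subgraph.edgeSet_sup, edgeSet_subgraphOfAdj, Set.union_singleton,
      Set.ncard_insert_of_notMem huvN, hNk]
  exact ⟨P, hP, hle.2 (Or.inr rfl), le_sup_left.trans hle⟩

lemma IsKExtendable.induce_compl_pair [DecidableEq V] (hG : G.IsKExtendable (k + 1))
    (hcard : 2 * k + 4 ≤ Fintype.card V) (huv : G.Adj u v) :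
    (G.induce ((({u, v} : Finset V)ᶜ : Finset V) : Set V)).IsKExtendable k := by
  set s : Set V := ((({u, v} : Finset V)ᶜ : Finset V) : Set V)
  have hs : ∀ {x}, x ∈ s ↔ x ≠ u ∧ x ≠ v := by simp [s]
  have hclosed : ∀ P : G.Subgraph, P.IsPerfectMatching → P.Adj u v →
      ∀ ⦃x y⦄, x ∈ s → P.Adj x y → y ∈ s := by
    intro P hP hPuv x y hx hxy
    rw [hs] at hx ⊢
    refine ⟨?_, ?_⟩ <;> rintro rfl
    · exact hx.2 (hP.1.eq_of_adj_left hxy.symm hPuv)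
    · exact hx.1 (hP.1.eq_of_adj_left hxy.symm hPuv.symm)
  let ι := (Embedding.induce (G := G) s).toHom
  have hι : Function.Injective ι := Subtype.val_injective
  refine ⟨?_, fun M hM hMk => ?_⟩
  · obtain ⟨P₀, hP₀⟩ := hG.1
    obtain ⟨N, hN, hNk, hNuv⟩ :=
      hP₀.exists_isMatching_ncard_edgeSet_disjoint {u, v} (m := k) <| by
      rw [Nat.card_eq_fintype_card]
      have := Finset.card_le_two (a := u) (b := v)
      omega
    obtain ⟨P, hP, hPuv, -⟩ := hG.exists_isPerfectMatching_adj_le huv hN hNk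
      (Set.disjoint_right.mp hNuv (by simp)) (Set.disjoint_right.mp hNuv (by simp))
    exact ⟨_, hP.comap_induce (hclosed P hP hPuv)⟩
  · have hMs : (M.map ι).support ⊆ s := by
      rintro _ ⟨_, a, b, -, rfl, -⟩
      exact a.2
    obtain ⟨P, hP, hPuv, hMP⟩ := hG.exists_isPerfectMatching_adj_le huv
      (hM.map ι hι)
      (by rw [Subgraph.edgeSet_map, Set.ncard_image_of_injective _ (Sym2.map.injective hι), hMk])
      (fun h => (hs.mp (hMs h)).1 rfl) (fun h => (hs.mp (hMs h)).2 rfl)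
    exact ⟨_, hP.comap_induce (hclosed P hP hPuv), (Subgraph.map_le_iff_le_comap ι M P).mp hMP⟩

lemma IsKExtendable.of_iso [Fintype W] {G' : SimpleGraph W} (f : G ≃g G')
    (hG : G.IsKExtendable k) : G'.IsKExtendable k := by
  have hmap : ∀ {P : G.Subgraph}, P.IsPerfectMatching → (P.map f.toHom).IsPerfectMatching :=
    fun hP => ⟨hP.1.map _ f.injective, fun x => ⟨f.symm x, hP.2 _, by simp⟩⟩
  refine ⟨let ⟨P, hP⟩ := hG.1; ⟨_, hmap hP⟩, fun M hM hMk => ?_⟩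
  have hinj : Function.Injective f.symm.toHom := f.symm.injective
  obtain ⟨P, hP, hle⟩ := hG.2 (M.map f.symm.toHom) (hM.map _ hinj) <| by
    rw [Subgraph.edgeSet_map, Set.ncard_image_of_injective _ (Sym2.map.injective hinj), hMk]
  refine ⟨_, hmap hP, ?_⟩
  calc M = (M.map f.symm.toHom).map f.toHom := by
        rw [← Subgraph.map_comp, Iso.toHom_comp_symm_toHom, Subgraph.map_id]
    _ ≤ P.map f.toHom := Subgraph.map_mono hle

end SimpleGraph

theorem nkGraph_delete_edge_vertices {V : Type*} [Fintype V] [DecidableEq V]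
    (G : SimpleGraph V) (n k : ℕ) (hk : 1 ≤ k) (h : G.IsNKGraph n k)
    (u v : V) (huv : G.Adj u v) :
    (G.induce ((({u, v} : Finset V)ᶜ : Finset V) : Set V)).IsNKGraph n (k - 1) := by
  obtain ⟨k, rfl⟩ : ∃ m, k = m + 1 := ⟨k - 1, by omega⟩
  rw [Nat.add_sub_cancel]
  obtain ⟨hcard, hpar, hext⟩ := h
  have hcompl : ∀ s : Finset V,
      Fintype.card ((sᶜ : Finset V) : Set V) = Fintype.card V - s.card :=
    fun s => (Fintype.card_coe _).trans (Finset.card_compl s)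
  have hW := hcompl {u, v}
  rw [Finset.card_pair huv.ne] at hW
  refine ⟨by omega, by omega, fun S hS => ?_⟩
  set S' := S.map (Function.Embedding.subtype _)
  have hS' : S'.card = n := by simp [S', hS]
  have huS' : u ∉ S' := by simp [S']
  have hvS' : v ∉ S' := by simp [S']
  have hdel := (hext S' hS').induce_compl_pair (by have := hcompl S'; omega)
    (show (G.induce _).Adj ⟨u, by simpa using huS'⟩ ⟨v, by simpa using hvS'⟩ from huv)
  exact hdel.of_iso (G.induceInduceIsoOfImageEq (by ext x; simp [S']; tauto))
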